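/- Let n ≥ 1, d ≥ 1, α > 0 and p ∈ (0,1]. Let S be an n×n real symmetric matrix and let v, v★, u, u★ be n×d real matrices. Set z = v − α·S·u and z★ = v★ − α·S·u★, and assume S·z★ = 0. Define û = u + (p/α)·S·z and, for θ ∈ {0,1}, ẑ(θ) = z − (θ·α/p)·S·(û − u). Then p·‖ẑ(1) − z★‖_F² + (1−p)·‖ẑ(0) − z★‖_F² = ‖v − v★‖_F² − α²·‖S·(u − u★)‖_F² + (α²/p)·‖S·(û − u)‖_F² − 2α·⟪S·(û − u★), z − z★⟫_F. -/

import Mathlib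

noncomputable section

/-- An `n × d` real matrix, viewed as `n` rows in Euclidean space `ℝ^d`. -/
abbrev Mat (n d : ℕ) := Fin n → EuclideanSpace ℝ (Fin d)

/-- Multiplication of an `n × n` matrix with an `n × d` matrix. -/
def matMul {n d : ℕ} (S : Matrix (Fin n) (Fin n) ℝ) (x : Mat n d) : Mat n d :=
  fun i => ∑ j, S i j • x j

/-- Squared Frobenius norm of an `n × d` matrix. -/
def fro2 {n d : ℕ} (x : Mat n d) : ℝ := ∑ i, ‖x i‖ ^ 2

/-- Frobenius inner product of two `n × d` matrices. -/
def frInner {n d : ℕ} (x y : Mat n d) : ℝ := ∑ i, inner ℝ (x i) (y i)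

lemma matMul_sub {n d : ℕ} (S : Matrix (Fin n) (Fin n) ℝ) (x y : Mat n d) :
    matMul S (x - y) = matMul S x - matMul S y := by
  funext i
  simp [matMul, smul_sub, Finset.sum_sub_distrib]

lemma matMul_add {n d : ℕ} (S : Matrix (Fin n) (Fin n) ℝ) (x y : Mat n d) :
    matMul S (x + y) = matMul S x + matMul S y := by
  funext i
  simp [matMul, smul_add, Finset.sum_add_distrib]

lemma frInner_comm {n d : ℕ} (x y : Mat n d) : frInner x y = frInner y x :=
  Finset.sum_congr rfl fun i _ => real_inner_comm _ _

lemma frInner_add_left {n d : ℕ} (x y z : Mat n d) :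
    frInner (x + y) z = frInner x z + frInner y z := by
  simp [frInner, inner_add_left, Finset.sum_add_distrib]

lemma frInner_sub_right {n d : ℕ} (x y z : Mat n d) :
    frInner x (y - z) = frInner x y - frInner x z := by
  simp [frInner, inner_sub_right, Finset.sum_sub_distrib]

lemma frInner_smul_right {n d : ℕ} (c : ℝ) (x y : Mat n d) :
    frInner x (c • y) = c * frInner x y := by
  rw [frInner, frInner, Finset.mul_sum]
  exact Finset.sum_congr rfl fun i _ => real_inner_smul_right _ _ _

lemma frInner_sub_left {n d : ℕ} (x y z : Mat n d) :
    frInner (x - y) z = frInner x z - frInner y z := by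
  simp [frInner, inner_sub_left, Finset.sum_sub_distrib]

lemma frInner_smul_left {n d : ℕ} (c : ℝ) (x y : Mat n d) :
    frInner (c • x) y = c * frInner x y := by
  rw [frInner, frInner, Finset.mul_sum]
  exact Finset.sum_congr rfl fun i _ => real_inner_smul_left _ _ _

lemma fro2_sub {n d : ℕ} (x y : Mat n d) :
    fro2 (x - y) = fro2 x - 2 * frInner x y + fro2 y := by
  simp only [fro2, frInner, Pi.sub_apply]
  rw [Finset.mul_sum, ← Finset.sum_sub_distrib, ← Finset.sum_add_distrib]
  refine Finset.sum_congr rfl fun i _ => ?_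
  rw [norm_sub_sq_real]

lemma fro2_smul {n d : ℕ} (c : ℝ) (x : Mat n d) :
    fro2 (c • x) = c ^ 2 * fro2 x := by
  simp [fro2, norm_smul, mul_pow, Finset.mul_sum]

/-- **Primal expectation identity** from the proof of Lemma 2: the expectation over
the Bernoulli(p) coin `θ` of `‖ẑ(θ) − z★‖_F²`. -/
theorem primal_expectation_identity
    (n d : ℕ) (hn : 1 ≤ n) (hd : 1 ≤ d)
    (α p : ℝ) (hα0 : 0 < α) (hp0 : 0 < p) (hp1 : p ≤ 1)
    (S : Matrix (Fin n) (Fin n) ℝ) (hSsymm : S.IsSymm)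
    (v vstar u ustar : Mat n d)
    (z zstar : Mat n d)
    (hz : z = v - α • matMul S u)
    (hzstar : zstar = vstar - α • matMul S ustar)
    (hSz : matMul S zstar = 0)
    (uhat : Mat n d) (huhat : uhat = u + (p / α) • matMul S z)
    (zhat : Bool → Mat n d)
    (hzhat : ∀ θ, zhat θ =
        z - ((if θ then (1 : ℝ) else 0) * (α / p)) • matMul S (uhat - u)) :
    p * fro2 (zhat true - zstar) + (1 - p) * fro2 (zhat false - zstar)
      = fro2 (v - vstar) - α ^ 2 * fro2 (matMul S (u - ustar))
        + α ^ 2 / p * fro2 (matMul S (uhat - u))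
        - 2 * α * frInner (matMul S (uhat - ustar)) (z - zstar) := by
  set A := v - vstar with hA
  set B := matMul S (u - ustar) with hB
  set W := matMul S (uhat - u) with hW
  have hmsmul : ∀ (c : ℝ) (x : Mat n d), matMul S (c • x) = c • matMul S x := by
    intro c x
    funext i
    simp [matMul, Finset.smul_sum, smul_smul, mul_comm]
  have hX : z - zstar = A - α • B := by
    rw [hz, hzstar, hA, hB, matMul_sub, smul_sub]
    abel
  have hUB : matMul S (uhat - ustar) = W + B := by
    have : uhat - ustar = (uhat - u) + (u - ustar) := by abel
    rw [this, matMul_add]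
  have ht : zhat true - zstar = (A - α • B) - (α / p) • W := by
    rw [hzhat true, ← hX]; simp; abel
  have hf : zhat false - zstar = A - α • B := by
    rw [hzhat false, ← hX]; simp
  rw [ht, hf, hUB, hX]
  have hp' : p ≠ 0 := ne_of_gt hp0
  have hBB : frInner B B = fro2 B :=
    Finset.sum_congr rfl fun i _ => real_inner_self_eq_norm_sq _
  simp only [fro2_sub, fro2_smul, frInner_sub_right, frInner_sub_left, frInner_smul_right,
    frInner_smul_left, frInner_add_left, hBB]
  rw [frInner_comm B A, frInner_comm W A, frInner_comm W B]
  field_simp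
  ring
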